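/- arXiv:0808.2747 — 8 statements merged into one kernel-verified Lean document; each statement's English description precedes it below -/
import Mathlib

section
/- Let π be a possibility distribution on a nonempty finite set X and let p be a probability distribution on X. Then p belongs to the credal set 𝒫_π if and only if for every α ∈ (0,1], P({x ∈ X : π(x) > α}) ≥ 1 − α. -/
open Finset
open scoped Classical

variable {X : Type*}

/-- A probability distribution on a finite set `X`. -/
def IsProbDist [Fintype X] (p : X → ℝ) : Prop :=
  (∀ x, 0 ≤ p x) ∧ ∑ x, p x = 1

/-- Maximum of `f` over the finite set `A`, with the maximum over the empty set taken to be 0. -/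
noncomputable def finMax {ι : Type*} (A : Finset ι) (f : ι → ℝ) : ℝ :=
  if h : A.Nonempty then A.sup' h f else 0

/-- A possibility distribution on a finite set `X`. -/
def IsPossDist [Fintype X] (π : X → ℝ) : Prop :=
  (∀ x, 0 ≤ π x ∧ π x ≤ 1) ∧ ∃ x, π x = 1

/-- Necessity measure of a possibility distribution: `N(A) = 1 - max_{x ∈ Aᶜ} π x`. -/
noncomputable def necessity [Fintype X] [DecidableEq X] (π : X → ℝ) (A : Finset X) : ℝ :=
  1 - finMax Aᶜ π

/-- The credal set induced by a possibility distribution. -/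
def credalPoss [Fintype X] [DecidableEq X] (π : X → ℝ) : Set (X → ℝ) :=
  {p | IsProbDist p ∧ ∀ A : Finset X, necessity π A ≤ ∑ x ∈ A, p x}

/-!
The necessity of a strict cut `{π > α}` is at least `1 - α`, so the necessity constraints imply
the cut inequalities. Conversely, with `α = max_{Aᶜ} π` every cut `{π > β}` with `β ≥ α` lies
inside `A`, so the cut inequalities give `P(A) ≥ 1 - β` for all `β ∈ (α, 1]`, hence
`P(A) ≥ 1 - α = N(A)`.
-/

section finMax

variable {ι : Type*} {A : Finset ι} {f : ι → ℝ}

theorem le_finMax {i : ι} (hi : i ∈ A) : f i ≤ finMax A f := by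
  rw [finMax, dif_pos ⟨i, hi⟩]
  exact le_sup' f hi

theorem finMax_le {a : ℝ} (ha : 0 ≤ a) (h : ∀ i ∈ A, f i ≤ a) : finMax A f ≤ a := by
  unfold finMax
  split_ifs with hA
  · exact sup'_le hA f h
  · exact ha

theorem finMax_nonneg (h : ∀ i ∈ A, 0 ≤ f i) : 0 ≤ finMax A f := by
  unfold finMax
  split_ifs with hA
  · obtain ⟨i, hi⟩ := hA
    exact (h i hi).trans (le_sup' f hi)
  · exact le_rfl

end finMax

section necessity

variable [Fintype X] [DecidableEq X]

theorem sub_le_necessity_filter_lt (π : X → ℝ) {α : ℝ} (hα : 0 ≤ α) :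
    1 - α ≤ necessity π (univ.filter fun x => α < π x) := by
  have : finMax (univ.filter fun x => α < π x)ᶜ π ≤ α :=
    finMax_le hα fun x hx => by simpa using hx
  rw [necessity]
  linarith

theorem filter_lt_subset_of_finMax_compl_le {π : X → ℝ} {A : Finset X} {β : ℝ}
    (hβ : finMax Aᶜ π ≤ β) : univ.filter (fun x => β < π x) ⊆ A := by
  intro x hx
  by_contra hxA
  have : π x ≤ finMax Aᶜ π := le_finMax (mem_compl.mpr hxA)
  have : β < π x := (mem_filter.mp hx).2
  linarith

end necessity

theorem statement0_general [Fintype X] [DecidableEq X]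
    (π : X → ℝ) (hπ : IsPossDist π) (p : X → ℝ) (hp : IsProbDist p) :
    p ∈ credalPoss π ↔
      ∀ α : ℝ, 0 < α → α ≤ 1 →
        1 - α ≤ ∑ x ∈ Finset.univ.filter (fun x => α < π x), p x := by
  constructor
  · rintro ⟨-, hN⟩ α hα _
    exact (sub_le_necessity_filter_lt π hα.le).trans (hN _)
  · intro hcut
    refine ⟨hp, fun A => ?_⟩
    have hPA : 0 ≤ ∑ x ∈ A, p x := sum_nonneg fun x _ => hp.1 x
    suffices 1 - ∑ x ∈ A, p x ≤ finMax Aᶜ π by rw [necessity]; linarith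
    refine le_of_forall_gt_imp_ge_of_dense fun β hβ => ?_
    rcases le_or_gt β 1 with hβ1 | hβ1
    · have hβ0 : 0 < β := (finMax_nonneg fun x _ => (hπ.1 x).1).trans_lt hβ
      have := (hcut β hβ0 hβ1).trans <| sum_le_sum_of_subset_of_nonneg
        (filter_lt_subset_of_finMax_compl_le hβ.le) fun x _ _ => hp.1 x
      linarith
    · linarith

theorem statement0 [Fintype X] [Nonempty X] [DecidableEq X]
    (π : X → ℝ) (hπ : IsPossDist π) (p : X → ℝ) (hp : IsProbDist p) :
    p ∈ credalPoss π ↔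
      ∀ α : ℝ, 0 < α → α ≤ 1 →
        1 - α ≤ ∑ x ∈ Finset.univ.filter (fun x => α < π x), p x :=
  statement0_general π hπ p hp
end

section
/- For every generalized p-box on a nonempty finite set X, with credal set 𝒫, there exists a mass assignment m on X whose belief function Bel satisfies 𝒫_Bel = 𝒫. -/
open Finset
open scoped Classical

variable {X : Type*}

/-- The index `i(x) = min {i | x ∈ A i}` of the first nested set containing `x`. -/
noncomputable def idxOf (A : ℕ → Finset X) (x : X) : ℕ := sInf {i | x ∈ A i}

/-- The upper possibility distribution `π̄(x) = β_{i(x)}` of a generalized p-box. -/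
noncomputable def piUpper (A : ℕ → Finset X) (β : ℕ → ℝ) (x : X) : ℝ :=
  β (idxOf A x)

/-- The lower possibility distribution
`π̲(x) = 1 − max({0} ∪ {α_j : 0 ≤ j ≤ n, α_j < α_{i(x)}})` of a generalized p-box. -/
noncomputable def piLower (A : ℕ → Finset X) (α : ℕ → ℝ) (n : ℕ) (x : X) : ℝ :=
  1 - max 0 (finMax ((Finset.range (n + 1)).filter (fun j => α j < α (idxOf A x))) α)

/-- The credal set of a generalized p-box given by nested sets `A i` and bounds `α i ≤ β i`,
`i = 1, …, n`. -/
def credalGPB [Fintype X] (n : ℕ) (A : ℕ → Finset X) (α β : ℕ → ℝ) : Set (X → ℝ) :=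
  {p | IsProbDist p ∧ ∀ k, 1 ≤ k → k ≤ n →
    α k ≤ ∑ x ∈ A k, p x ∧ ∑ x ∈ A k, p x ≤ β k}

/-- A mass assignment (random set) on the finite set `X`. -/
def IsMass [Fintype X] [DecidableEq X] (m : Finset X → ℝ) : Prop :=
  (∀ E, 0 ≤ m E) ∧ m ∅ = 0 ∧ ∑ E : Finset X, m E = 1

/-- The belief function of a mass assignment: `Bel(B) = ∑_{E ⊆ B} m(E)`. -/
noncomputable def bel [Fintype X] [DecidableEq X] (m : Finset X → ℝ) (B : Finset X) : ℝ :=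
  ∑ E ∈ Finset.univ.filter (fun E => E ⊆ B), m E

/-- The credal set induced by the belief function of a mass assignment. -/
def credalBel [Fintype X] [DecidableEq X] (m : Finset X → ℝ) : Set (X → ℝ) :=
  {p | IsProbDist p ∧ ∀ B : Finset X, bel m B ≤ ∑ x ∈ B, p x}

/-! The witness is the comonotone random set of the p-box: draw a level `u` uniformly from
`[0, 1)`, let `a` and `b` be the indices with `α a ≤ u < α (a + 1)` and `β b ≤ u < β (b + 1)`, and
take the focal set `A (a + 1) \ A b`. All levels below `α k` give focal sets inside `A k`, and all
levels above `β k` give focal sets outside `A k`, so `Bel` dominates the p-box bounds. Conversely,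
let `p` satisfy the p-box constraints and put `g k = P (A k)`. A level `u` whose focal set lies in
`B` satisfies `g b ≤ β b ≤ u < α (a + 1) ≤ g (a + 1)`, hence lies in some `[g t, g (t + 1))` with
`t ∈ [b, a]`, and then `A (t + 1) \ A t ⊆ B`. These intervals are disjoint of lengths
`P (A (t + 1) \ A t)`, so `Bel B ≤ P B`. -/

open MeasureTheory

section PushMass

variable {ι : Type*} [Fintype X] [DecidableEq X]

noncomputable def pushMass (s : Finset ι) (F : ι → Finset X) (w : ι → ℝ) (E : Finset X) : ℝ :=
  ∑ i ∈ s with F i = E, w i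

theorem bel_pushMass (s : Finset ι) (F : ι → Finset X) (w : ι → ℝ) (B : Finset X) :
    bel (pushMass s F w) B = ∑ i ∈ s with F i ⊆ B, w i := by
  rw [bel, ← sum_fiberwise_of_maps_to (g := F) (t := univ.filter (· ⊆ B))
    (fun i hi => by simpa using (mem_filter.mp hi).2)]
  refine sum_congr rfl fun E hE => ?_
  rw [pushMass, filter_filter]
  refine sum_congr (filter_congr fun i _ => ?_) fun _ _ => rfl
  exact ⟨fun h => ⟨h ▸ (mem_filter.mp hE).2, h⟩, And.right⟩

theorem isMass_pushMass {s : Finset ι} {F : ι → Finset X} {w : ι → ℝ}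
    (hw : ∀ i ∈ s, 0 ≤ w i) (hF : ∀ i ∈ s, 0 < w i → (F i).Nonempty) (hs : ∑ i ∈ s, w i = 1) :
    IsMass (pushMass s F w) := by
  refine ⟨fun E => sum_nonneg fun i hi => hw i (mem_filter.mp hi).1, ?_, ?_⟩
  · refine sum_eq_zero fun i hi => ?_
    obtain ⟨his, hFi⟩ := mem_filter.mp hi
    refine (hw i his).eq_or_lt.elim Eq.symm fun hpos => ?_
    simpa [hFi] using hF i his hpos
  · rw [← hs]
    exact sum_fiberwise s F w

end PushMass

theorem Monotone.biUnion_Ico_Ico_map_add_one {β : Type*} [LinearOrder β] {f : ℕ → β}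
    (hf : Monotone f) (m n : ℕ) :
    ⋃ i ∈ Finset.Ico m n, Set.Ico (f i) (f (i + 1)) = Set.Ico (f m) (f n) := by
  rcases le_total n m with hnm | hmn
  · simp [Set.Ico_eq_empty_of_le (hf hnm), Finset.Ico_eq_empty_of_le hnm]
  induction n, hmn using Nat.le_induction with
  | base => simp
  | succ k hmk ih =>
    rw [Nat.Ico_succ_right_eq_insert_Ico hmk, Finset.set_biUnion_insert, ih, Set.union_comm,
      Set.Ico_union_Ico_eq_Ico (hf hmk) (hf k.le_succ)]

theorem monotone_comp_min {β : Type*} [Preorder β] {f : ℕ → β} {n : ℕ}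
    (hf : ∀ i < n, f i ≤ f (i + 1)) : Monotone fun i => f (min i n) := by
  refine monotone_nat_of_le_succ fun i => ?_
  rcases lt_or_ge i n with h | h
  · rw [min_eq_left h.le, min_eq_left h]
    exact hf i h
  · rw [min_eq_right h, min_eq_right (h.trans i.le_succ)]

theorem credalGPB_comp_min [Fintype X] (n : ℕ) (A : ℕ → Finset X) (α β : ℕ → ℝ) :
    credalGPB n (fun i => A (min i n)) (fun i => α (min i n)) (fun i => β (min i n))
      = credalGPB n A α β := by
  ext p
  refine and_congr_right fun _ => forall₃_congr fun k _ hk => ?_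
  dsimp only
  rw [min_eq_left hk]

theorem bounds_of_mem_credalGPB [Fintype X] {n : ℕ} {A : ℕ → Finset X} {α β : ℕ → ℝ}
    (hA0 : A 0 = ∅) (hα0 : α 0 = 0) (hαβ : α ≤ β) {p : X → ℝ}
    (hp : p ∈ credalGPB n A α β) {k : ℕ} (hk : k ≤ n) :
    α k ≤ ∑ x ∈ A k, p x ∧ ∑ x ∈ A k, p x ≤ β k := by
  rcases Nat.eq_zero_or_pos k with rfl | hk0
  · simpa [hA0, hα0] using hαβ 0
  · exact hp.2 k hk0 hk

theorem sum_sub_sum_le_of_sdiff_subset [Fintype X] [DecidableEq X] {A : ℕ → Finset X}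
    (hA : Monotone A) {p : X → ℝ} (hp : ∀ x, 0 ≤ p x) {T : Finset ℕ} {B : Finset X}
    (hT : ∀ t ∈ T, A (t + 1) \ A t ⊆ B) :
    ∑ t ∈ T, (∑ x ∈ A (t + 1), p x - ∑ x ∈ A t, p x) ≤ ∑ x ∈ B, p x := by
  have hlayer : ∀ t ∈ T, ∑ x ∈ A (t + 1), p x - ∑ x ∈ A t, p x = ∑ x ∈ A (t + 1) \ A t, p x :=
    fun t _ => (sum_sdiff_eq_sub (hA (Nat.le_add_right t 1))).symm
  have hdisj : (T : Set ℕ).PairwiseDisjoint fun t => A (t + 1) \ A t := fun t _ t' _ hne => by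
    simpa only [Function.onFun, hA.disjointed_add_one] using
      disjoint_disjointed A (show t + 1 ≠ t' + 1 by simpa using hne)
  rw [sum_congr rfl hlayer, ← sum_biUnion hdisj]
  exact sum_le_sum_of_subset_of_nonneg (biUnion_subset.mpr hT) fun x _ _ => hp x

namespace PBox

section Cell

variable {α β : ℕ → ℝ}

def cell (α β : ℕ → ℝ) (q : ℕ × ℕ) : Set ℝ :=
  Set.Ico (α q.1) (α (q.1 + 1)) ∩ Set.Ico (β q.2) (β (q.2 + 1))

theorem measurableSet_cell (q : ℕ × ℕ) : MeasurableSet (cell α β q) :=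
  measurableSet_Ico.inter measurableSet_Ico

theorem volume_cell_ne_top (q : ℕ × ℕ) : volume (cell α β q) ≠ ⊤ :=
  measure_ne_top_of_subset Set.inter_subset_left measure_Ico_lt_top.ne

theorem pairwise_disjoint_cell (hα : Monotone α) (hβ : Monotone β) :
    Pairwise (Function.onFun Disjoint (cell α β)) := by
  rintro ⟨a, b⟩ ⟨a', b'⟩ hne
  rcases eq_or_ne a a' with rfl | ha
  · have hb : b ≠ b' := fun h => hne (by rw [h])
    exact (hβ.pairwise_disjoint_on_Ico_succ hb).mono Set.inter_subset_right
      Set.inter_subset_right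
  · exact (hα.pairwise_disjoint_on_Ico_succ ha).mono Set.inter_subset_left
      Set.inter_subset_left

theorem sum_volume_cell_Ico_prod (hα : Monotone α) (hβ : Monotone β) (k l m r : ℕ) :
    ∑ q ∈ Finset.Ico k l ×ˢ Finset.Ico m r, volume.real (cell α β q)
      = volume.real (Set.Ico (α k) (α l) ∩ Set.Ico (β m) (β r)) := by
  rw [← measureReal_biUnion_finset ((pairwise_disjoint_cell hα hβ).set_pairwise _)
      (fun q _ => measurableSet_cell q) (fun q _ => volume_cell_ne_top q),
    ← hα.biUnion_Ico_Ico_map_add_one, ← hβ.biUnion_Ico_Ico_map_add_one]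
  congr 1
  ext u
  simp only [cell, Set.mem_iUnion, Set.mem_inter_iff, Finset.mem_product, exists_prop,
    Prod.exists]
  aesop

theorem sum_volume_cell_range_prod_range (hα : Monotone α) (hβ : Monotone β) {n k : ℕ}
    (hα0 : α 0 = 0) (hαn : α n = 1) (hβ0 : β 0 = 0) (hβn : β n = 1) (hk : k ≤ n) :
    ∑ q ∈ range k ×ˢ range n, volume.real (cell α β q) = α k := by
  rw [range_eq_Ico, range_eq_Ico, sum_volume_cell_Ico_prod hα hβ, hα0, hβ0, hβn,
    Set.Ico_inter_Ico, sup_idem, inf_eq_left.mpr (hαn ▸ hα hk),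
    Real.volume_real_Ico_of_le (hα0 ▸ hα k.zero_le), sub_zero]

theorem sum_volume_cell_range_prod_Ico (hα : Monotone α) (hβ : Monotone β) {n k : ℕ}
    (hα0 : α 0 = 0) (hαn : α n = 1) (hβ0 : β 0 = 0) (hβn : β n = 1) (hk : k ≤ n) :
    ∑ q ∈ range n ×ˢ Finset.Ico k n, volume.real (cell α β q) = 1 - β k := by
  rw [range_eq_Ico, sum_volume_cell_Ico_prod hα hβ, hα0, hαn, hβn, Set.Ico_inter_Ico,
    sup_eq_right.mpr (hβ0 ▸ hβ k.zero_le), inf_idem, Real.volume_real_Ico_of_le (hβn ▸ hβ hk)]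

theorem sum_volume_cell_le (hα : Monotone α) (hβ : Monotone β) {g : ℕ → ℝ} (hg : Monotone g)
    {n : ℕ} (hαg : ∀ k ≤ n, α k ≤ g k) (hgβ : ∀ k ≤ n, g k ≤ β k)
    {S : Finset (ℕ × ℕ)} (hS : S ⊆ range n ×ˢ range n) {T : Finset ℕ}
    (hST : ∀ q ∈ S, Finset.Ico q.2 (q.1 + 1) ⊆ T) :
    ∑ q ∈ S, volume.real (cell α β q) ≤ ∑ t ∈ T, (g (t + 1) - g t) := by
  have hcover : ⋃ q ∈ S, cell α β q ⊆ ⋃ t ∈ T, Set.Ico (g t) (g (t + 1)) := by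
    refine Set.iUnion₂_subset fun q hq => ?_
    rintro u ⟨⟨-, hu⟩, hu', -⟩
    obtain ⟨h1, h2⟩ := Finset.mem_product.mp (hS hq)
    have hmem : u ∈ Set.Ico (g q.2) (g (q.1 + 1)) :=
      ⟨(hgβ _ (mem_range.mp h2).le).trans hu', hu.trans_le (hαg _ (mem_range.mp h1))⟩
    rw [← hg.biUnion_Ico_Ico_map_add_one] at hmem
    exact Set.biUnion_subset_biUnion_left (Finset.coe_subset.mpr (hST q hq)) hmem
  calc ∑ q ∈ S, volume.real (cell α β q)
      = volume.real (⋃ q ∈ S, cell α β q) :=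
        (measureReal_biUnion_finset ((pairwise_disjoint_cell hα hβ).set_pairwise _)
          (fun q _ => measurableSet_cell q) (fun q _ => volume_cell_ne_top q)).symm
    _ ≤ volume.real (⋃ t ∈ T, Set.Ico (g t) (g (t + 1))) :=
        measureReal_mono hcover
          (measure_biUnion_lt_top T.finite_toSet fun _ _ => measure_Ico_lt_top).ne
    _ ≤ ∑ t ∈ T, volume.real (Set.Ico (g t) (g (t + 1))) := measureReal_biUnion_finset_le _ _
    _ = ∑ t ∈ T, (g (t + 1) - g t) :=
        sum_congr rfl fun t _ => Real.volume_real_Ico_of_le (hg t.le_succ)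

end Cell

variable [DecidableEq X] {n : ℕ} {A : ℕ → Finset X} {α β : ℕ → ℝ}

def focal (A : ℕ → Finset X) (q : ℕ × ℕ) : Finset X := A (q.1 + 1) \ A q.2

theorem focal_nonempty (hA : Monotone A) (hstep : ∀ i < n, A i ⊂ A (i + 1)) (hβ : Monotone β)
    (hαβ : α ≤ β) {q : ℕ × ℕ} (hq : q.1 < n) (hcell : (cell α β q).Nonempty) :
    (focal A q).Nonempty := by
  obtain ⟨u, ⟨-, hu⟩, hu', -⟩ := hcell
  have hq21 : q.2 ≤ q.1 :=
    Nat.lt_succ_iff.mp (hβ.reflect_lt (hu'.trans_lt (hu.trans_le (hαβ _))))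
  obtain ⟨x, hx, hxq⟩ := Finset.exists_of_ssubset (hstep q.1 hq)
  exact ⟨x, Finset.mem_sdiff.mpr ⟨hx, fun h => hxq (hA hq21 h)⟩⟩

variable [Fintype X]

noncomputable def mass (n : ℕ) (A : ℕ → Finset X) (α β : ℕ → ℝ) : Finset X → ℝ :=
  pushMass (range n ×ˢ range n) (focal A) fun q => volume.real (cell α β q)

theorem isMass_mass (hA : Monotone A) (hstep : ∀ i < n, A i ⊂ A (i + 1))
    (hα : Monotone α) (hβ : Monotone β) (hαβ : α ≤ β)
    (hα0 : α 0 = 0) (hαn : α n = 1) (hβ0 : β 0 = 0) (hβn : β n = 1) :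
    IsMass (mass n A α β) := by
  refine isMass_pushMass (fun q _ => measureReal_nonneg) (fun q hq hpos => ?_)
    (sum_volume_cell_range_prod_range hα hβ hα0 hαn hβ0 hβn le_rfl ▸ hαn)
  refine focal_nonempty hA hstep hβ hαβ (mem_range.mp (mem_product.mp hq).1) ?_
  exact Set.nonempty_iff_ne_empty.mpr fun h => by simp [h] at hpos

theorem credalBel_mass_subset (hA : Monotone A) (hα : Monotone α) (hβ : Monotone β)
    (hα0 : α 0 = 0) (hαn : α n = 1) (hβ0 : β 0 = 0) (hβn : β n = 1) :
    credalBel (mass n A α β) ⊆ credalGPB n A α β := by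
  rintro p ⟨hp, hbel⟩
  refine ⟨hp, fun k _ hk => ⟨?_, ?_⟩⟩
  · calc α k = ∑ q ∈ range k ×ˢ range n, volume.real (cell α β q) :=
          (sum_volume_cell_range_prod_range hα hβ hα0 hαn hβ0 hβn hk).symm
      _ ≤ bel (mass n A α β) (A k) := by
          rw [mass, bel_pushMass]
          refine sum_le_sum_of_subset_of_nonneg (fun q hq => ?_) fun _ _ _ => measureReal_nonneg
          obtain ⟨h1, h2⟩ := mem_product.mp hq
          exact mem_filter.mpr ⟨mem_product.mpr ⟨mem_range.mpr ((mem_range.mp h1).trans_le hk),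
            h2⟩, sdiff_subset.trans (hA (mem_range.mp h1))⟩
      _ ≤ ∑ x ∈ A k, p x := hbel _
  · have hcompl : 1 - β k ≤ ∑ x ∈ (A k)ᶜ, p x :=
      calc 1 - β k = ∑ q ∈ range n ×ˢ Finset.Ico k n, volume.real (cell α β q) :=
            (sum_volume_cell_range_prod_Ico hα hβ hα0 hαn hβ0 hβn hk).symm
        _ ≤ bel (mass n A α β) (A k)ᶜ := by
            rw [mass, bel_pushMass]
            refine sum_le_sum_of_subset_of_nonneg (fun q hq => ?_) fun _ _ _ => measureReal_nonneg
            obtain ⟨h1, h2⟩ := mem_product.mp hq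
            obtain ⟨hkq, hqn⟩ := Finset.mem_Ico.mp h2
            exact mem_filter.mpr ⟨mem_product.mpr ⟨h1, mem_range.mpr hqn⟩,
              subset_compl_iff_disjoint_right.mpr (disjoint_sdiff_self_left.mono_right (hA hkq))⟩
        _ ≤ ∑ x ∈ (A k)ᶜ, p x := hbel _
    linarith [sum_compl_add_sum (A k) p, hp.2]

theorem credalGPB_subset_credalBel_mass (hA : Monotone A) (hA0 : A 0 = ∅)
    (hα : Monotone α) (hβ : Monotone β) (hαβ : α ≤ β) (hα0 : α 0 = 0) :
    credalGPB n A α β ⊆ credalBel (mass n A α β) := by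
  intro p hpGPB
  have hp := hpGPB.1
  refine ⟨hp, fun B => ?_⟩
  have hg : Monotone fun k => ∑ x ∈ A k, p x :=
    fun i j hij => sum_le_sum_of_subset_of_nonneg (hA hij) fun x _ _ => hp.1 x
  rw [mass, bel_pushMass]
  calc _ ≤ ∑ t ∈ range n with A (t + 1) \ A t ⊆ B, (∑ x ∈ A (t + 1), p x - ∑ x ∈ A t, p x) := by
        refine sum_volume_cell_le hα hβ hg
          (fun k hk => (bounds_of_mem_credalGPB hA0 hα0 hαβ hpGPB hk).1)
          (fun k hk => (bounds_of_mem_credalGPB hA0 hα0 hαβ hpGPB hk).2) (filter_subset _ _) ?_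
        intro q hq t ht
        obtain ⟨hqn, hqB⟩ := mem_filter.mp hq
        obtain ⟨hqt, htq⟩ := Finset.mem_Ico.mp ht
        refine mem_filter.mpr ⟨mem_range.mpr (htq.trans_le (mem_range.mp (mem_product.mp hqn).1)),
          ?_⟩
        exact (sdiff_subset_sdiff (hA htq) (hA hqt)).trans hqB
    _ ≤ ∑ x ∈ B, p x := sum_sub_sum_le_of_sdiff_subset hA hp.1 fun t ht => (mem_filter.mp ht).2

theorem credalBel_mass (hA : Monotone A) (hA0 : A 0 = ∅) (hα : Monotone α) (hβ : Monotone β)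
    (hαβ : α ≤ β) (hα0 : α 0 = 0) (hαn : α n = 1) (hβ0 : β 0 = 0) (hβn : β n = 1) :
    credalBel (mass n A α β) = credalGPB n A α β :=
  (credalBel_mass_subset hA hα hβ hα0 hαn hβ0 hβn).antisymm
    (credalGPB_subset_credalBel_mass hA hA0 hα hβ hαβ hα0)

end PBox

theorem statement4_general [Fintype X] [DecidableEq X]
    (n : ℕ) (A : ℕ → Finset X) (α β : ℕ → ℝ)
    (hA0 : A 0 = ∅)
    (hAnest : ∀ i, i < n → A i ⊂ A (i + 1))
    (hα0 : α 0 = 0) (hαn : α n = 1)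
    (hαmono : ∀ i j, i ≤ j → j ≤ n → α i ≤ α j)
    (hβ0 : β 0 = 0) (hβn : β n = 1)
    (hβmono : ∀ i j, i ≤ j → j ≤ n → β i ≤ β j)
    (hαβ : ∀ i, i ≤ n → α i ≤ β i) :
    ∃ m : Finset X → ℝ, IsMass m ∧ credalBel m = credalGPB n A α β := by
  -- Freezing the data beyond `n` makes all three sequences monotone on `ℕ`.
  have hA : Monotone fun i => A (min i n) := monotone_comp_min fun i hi => (hAnest i hi).subset
  have hα : Monotone fun i => α (min i n) := monotone_comp_min fun i hi => hαmono i _ i.le_succ hi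
  have hβ : Monotone fun i => β (min i n) := monotone_comp_min fun i hi => hβmono i _ i.le_succ hi
  have hαβ' : (fun i => α (min i n)) ≤ fun i => β (min i n) := fun i => hαβ _ (min_le_right i n)
  have hstep : ∀ i < n, A (min i n) ⊂ A (min (i + 1) n) := fun i hi => by
    simpa [min_eq_left hi.le, min_eq_left (Nat.succ_le_of_lt hi)] using hAnest i hi
  refine ⟨PBox.mass n _ _ _, PBox.isMass_mass hA hstep hα hβ hαβ' (by simpa) (by simpa)
    (by simpa) (by simpa), ?_⟩
  rw [PBox.credalBel_mass hA (by simpa) hα hβ hαβ' (by simpa) (by simpa) (by simpa) (by simpa),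
    credalGPB_comp_min]

theorem statement4 [Fintype X] [Nonempty X] [DecidableEq X]
    (n : ℕ) (A : ℕ → Finset X) (α β : ℕ → ℝ)
    (hA0 : A 0 = ∅) (hAn : A n = Finset.univ)
    (hAnest : ∀ i, i < n → A i ⊂ A (i + 1))
    (hα0 : α 0 = 0) (hαn : α n = 1)
    (hαmono : ∀ i j, i ≤ j → j ≤ n → α i ≤ α j)
    (hβ0 : β 0 = 0) (hβn : β n = 1)
    (hβmono : ∀ i j, i ≤ j → j ≤ n → β i ≤ β j)
    (hαβ : ∀ i, i ≤ n → α i ≤ β i) :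
    ∃ m : Finset X → ℝ, IsMass m ∧ credalBel m = credalGPB n A α β :=
  statement4_general n A α β hA0 hAnest hα0 hαn hαmono hβ0 hβn hβmono hαβ
end

section
/- Let a generalized p-box on a nonempty finite set X be given by strictly nested sets ∅ = A_0 ⊊ A_1 ⊊ … ⊊ A_n = X with bounds α_i, β_i, credal set 𝒫, and G_k = A_k ∖ A_{k−1}. Then 𝒫 is nonempty and, for all indices 1 ≤ i ≤ j ≤ n, the minimum of P(⋃_{k=i}^{j} G_k) over all probability distributions p ∈ 𝒫 equals max(0, α_j − β_{i−1}). -/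
/-!
Choose a point `z_k ∈ A_{k+1} ∖ A_k` in each gap of the chain. Any nondecreasing sequence
`γ` with `γ_0 = 0` is then realised as `P(A_m) = γ_m` by putting mass `γ_{k+1} - γ_k` on `z_k`.
Taking `γ_k = α_k ⊔ (α_j ⊓ β_k)` (that is, `α_j` clamped to `[α_k, β_k]`) gives a point of `𝒫`
with `P(A_j) = α_j` and `P(A_{i-1}) = α_{i-1} ⊔ (α_j ⊓ β_{i-1})`, so that
`P(A_j ∖ A_{i-1}) = 0 ⊔ (α_j - β_{i-1})`. This is optimal, since for every `p ∈ 𝒫` the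
set `⋃_{k=i}^j G_k = A_j ∖ A_{i-1}` has probability `P(A_j) - P(A_{i-1}) ≥ α_j - β_{i-1}`.
-/

open Finset
open scoped Classical

variable {X : Type*}

section NestedChain

variable {n : ℕ} {A : ℕ → Finset X}

theorem subset_of_le_of_nested (hA : ∀ k, k < n → A k ⊆ A (k + 1)) {a b : ℕ} (hab : a ≤ b)
    (hb : b ≤ n) : A a ⊆ A b := by
  induction b, hab using Nat.le_induction with
  | base => exact subset_rfl
  | succ b _ ih => exact (ih (by omega)).trans (hA b (by omega))

variable [DecidableEq X]

theorem biUnion_Icc_sdiff_pred (hA : ∀ k, k < n → A k ⊆ A (k + 1)) {i j : ℕ} (hij : i ≤ j)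
    (hj : j ≤ n) : (Icc i j).biUnion (fun k => A k \ A (k - 1)) = A j \ A (i - 1) := by
  induction j, hij using Nat.le_induction with
  | base => rw [Icc_self, singleton_biUnion]
  | succ j hij ih =>
    rw [← insert_Icc_right_eq_Icc_add_one (by omega), biUnion_insert, ih (by omega),
      Nat.add_sub_cancel]
    exact sdiff_union_sdiff_cancel (hA j (by omega))
      (subset_of_le_of_nested hA (by omega) (by omega))

theorem sum_sum_pi_single_of_nested (hA : ∀ k, k < n → A k ⊆ A (k + 1)) (z : Fin n → X)
    (hz : ∀ k : Fin n, z k ∈ A (k + 1) ∧ z k ∉ A k) (w : ℕ → ℝ) {m : ℕ} (hm : m ≤ n) :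
    ∑ x ∈ A m, ∑ k : Fin n, Pi.single (z k) (w k) x = ∑ k ∈ range m, w k := by
  have hz_mem : ∀ k : Fin n, z k ∈ A m ↔ (k : ℕ) < m := fun k => by
    refine ⟨fun h => ?_, fun h => subset_of_le_of_nested hA h hm (hz k).1⟩
    by_contra! hle
    exact (hz k).2 (subset_of_le_of_nested hA hle k.2.le h)
  rw [sum_comm]
  simp only [sum_pi_single', hz_mem]
  rw [Fin.sum_univ_eq_sum_range (fun k => if k < m then w k else 0), ← sum_filter]
  congr 1
  ext k
  simp only [mem_filter, mem_range]
  omega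

theorem exists_nonneg_sum_eq_of_nested (hA : ∀ k, k < n → A k ⊂ A (k + 1)) {γ : ℕ → ℝ}
    (hγ : ∀ k, k < n → γ k ≤ γ (k + 1)) :
    ∃ p : X → ℝ, (∀ x, 0 ≤ p x) ∧ ∀ m, m ≤ n → ∑ x ∈ A m, p x = γ m - γ 0 := by
  choose z hz using fun k : Fin n => exists_of_ssubset (hA k k.2)
  refine ⟨fun x => ∑ k : Fin n, (Pi.single (z k) (γ (k + 1) - γ k) : X → ℝ) x, fun x => ?_,
    fun m hm => ?_⟩
  · refine sum_nonneg fun k _ => ?_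
    rw [Pi.single_apply]
    split_ifs
    exacts [sub_nonneg.mpr (hγ k k.2), le_rfl]
  · exact (sum_sum_pi_single_of_nested (fun k hk => (hA k hk).subset) z hz
      (fun k => γ (k + 1) - γ k) hm).trans (sum_range_sub γ m)

end NestedChain

noncomputable def clampBounds (α β : ℕ → ℝ) (c : ℝ) (k : ℕ) : ℝ :=
  max (α k) (min c (β k))

section ClampBounds

variable {α β : ℕ → ℝ} {c : ℝ}

theorem clampBounds_le_clampBounds {a b : ℕ} (hα : α a ≤ α b) (hβ : β a ≤ β b) :
    clampBounds α β c a ≤ clampBounds α β c b :=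
  max_le_max hα (min_le_min le_rfl hβ)

theorem clampBounds_mem_Icc {k : ℕ} (h : α k ≤ β k) :
    clampBounds α β c k ∈ Set.Icc (α k) (β k) :=
  ⟨le_max_left _ _, max_le h (min_le_right _ _)⟩

theorem clampBounds_eq_of_eq {k : ℕ} (h : α k = β k) : clampBounds α β c k = α k :=
  le_antisymm (h ▸ (clampBounds_mem_Icc h.le).2) (clampBounds_mem_Icc h.le).1

theorem clampBounds_sub_clampBounds {l j : ℕ} (hl : α l ≤ α j) (hαβ : α l ≤ β l) :
    clampBounds α β (α j) j - clampBounds α β (α j) l = max 0 (α j - β l) := by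
  have hj : clampBounds α β (α j) j = α j := max_eq_left (min_le_left _ _)
  rw [hj, clampBounds]
  rcases le_total (α j) (β l) with h | h
  · rw [min_eq_left h, max_eq_right hl, sub_self, max_eq_left (by linarith)]
  · rw [min_eq_right h, max_eq_right hαβ, max_eq_right (by linarith)]

end ClampBounds

section CredalGPB

variable [Fintype X] {n : ℕ} {A : ℕ → Finset X} {α β : ℕ → ℝ} {p : X → ℝ}

theorem sum_le_of_mem_credalGPB (hp : p ∈ credalGPB n A α β) (hA0 : A 0 = ∅) (hβ0 : β 0 = 0)
    {k : ℕ} (hk : k ≤ n) : ∑ x ∈ A k, p x ≤ β k := by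
  rcases Nat.eq_zero_or_pos k with rfl | hk0
  · rw [hA0, hβ0, sum_empty]
  · exact (hp.2 k hk0 hk).2

theorem max_zero_sub_le_sum_sdiff [DecidableEq X] (hp : p ∈ credalGPB n A α β) (hA0 : A 0 = ∅)
    (hβ0 : β 0 = 0) {l j : ℕ} (hlj : A l ⊆ A j) (hl : l ≤ n) (hj : 1 ≤ j) (hjn : j ≤ n) :
    max 0 (α j - β l) ≤ ∑ x ∈ A j \ A l, p x :=
  max_le (sum_nonneg fun x _ => hp.1.1 x) <| by
    rw [sum_sdiff_eq_sub hlj]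
    linarith [(hp.2 j hj hjn).1, sum_le_of_mem_credalGPB hp hA0 hβ0 hl]

end CredalGPB

theorem statement5_general [Fintype X] [DecidableEq X]
    (n : ℕ) (A : ℕ → Finset X) (α β : ℕ → ℝ)
    (hA0 : A 0 = ∅) (hAn : A n = Finset.univ)
    (hAnest : ∀ i, i < n → A i ⊂ A (i + 1))
    (hα0 : α 0 = 0) (hαn : α n = 1)
    (hαmono : ∀ i j, i ≤ j → j ≤ n → α i ≤ α j)
    (hβ0 : β 0 = 0) (hβn : β n = 1)
    (hβmono : ∀ i j, i ≤ j → j ≤ n → β i ≤ β j)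
    (hαβ : ∀ i, i ≤ n → α i ≤ β i)
    (i j : ℕ) (hi : 1 ≤ i) (hij : i ≤ j) (hj : j ≤ n) :
    (credalGPB n A α β).Nonempty ∧
      IsLeast
        ((fun p : X → ℝ => ∑ x ∈ (Finset.Icc i j).biUnion (fun k => A k \ A (k - 1)), p x) ''
          credalGPB n A α β)
        (max 0 (α j - β (i - 1))) := by
  have hAsub : ∀ k, k < n → A k ⊆ A (k + 1) := fun k hk => (hAnest k hk).subset
  set γ := clampBounds α β (α j)
  obtain ⟨p, hp_nonneg, hpA⟩ := exists_nonneg_sum_eq_of_nested hAnest (γ := γ) fun k hk =>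
    clampBounds_le_clampBounds (hαmono k _ k.le_succ hk) (hβmono k _ k.le_succ hk)
  have hγ0 : γ 0 = 0 := (clampBounds_eq_of_eq (hα0.trans hβ0.symm)).trans hα0
  have hγn : γ n = 1 := (clampBounds_eq_of_eq (hαn.trans hβn.symm)).trans hαn
  have hp : p ∈ credalGPB n A α β := by
    refine ⟨⟨hp_nonneg, by rw [← hAn, hpA n le_rfl, hγn, hγ0, sub_zero]⟩, fun k _ hk => ?_⟩
    rw [hpA k hk, hγ0, sub_zero]
    exact clampBounds_mem_Icc (hαβ k hk)
  have hsub : A (i - 1) ⊆ A j := subset_of_le_of_nested hAsub (by omega) hj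
  simp only [biUnion_Icc_sdiff_pred hAsub hij hj]
  refine ⟨⟨p, hp⟩, ⟨p, hp, ?_⟩, ?_⟩
  · change ∑ x ∈ A j \ A (i - 1), p x = _
    rw [sum_sdiff_eq_sub hsub, hpA j hj, hpA (i - 1) (by omega), sub_sub_sub_cancel_right,
      clampBounds_sub_clampBounds (hαmono _ j (by omega) hj) (hαβ _ (by omega))]
  · rintro _ ⟨q, hq, rfl⟩
    exact max_zero_sub_le_sum_sdiff hq hA0 hβ0 hsub (by omega) (by omega) hj

theorem statement5 [Fintype X] [Nonempty X] [DecidableEq X]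
    (n : ℕ) (A : ℕ → Finset X) (α β : ℕ → ℝ)
    (hA0 : A 0 = ∅) (hAn : A n = Finset.univ)
    (hAnest : ∀ i, i < n → A i ⊂ A (i + 1))
    (hα0 : α 0 = 0) (hαn : α n = 1)
    (hαmono : ∀ i j, i ≤ j → j ≤ n → α i ≤ α j)
    (hβ0 : β 0 = 0) (hβn : β n = 1)
    (hβmono : ∀ i j, i ≤ j → j ≤ n → β i ≤ β j)
    (hαβ : ∀ i, i ≤ n → α i ≤ β i)
    (i j : ℕ) (hi : 1 ≤ i) (hij : i ≤ j) (hj : j ≤ n) :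
    (credalGPB n A α β).Nonempty ∧
      IsLeast
        ((fun p : X → ℝ => ∑ x ∈ (Finset.Icc i j).biUnion (fun k => A k \ A (k - 1)), p x) ''
          credalGPB n A α β)
        (max 0 (α j - β (i - 1))) :=
  statement5_general n A α β hA0 hAn hAnest hα0 hαn hαmono hβ0 hβn hβmono hαβ i j hi hij hj
end

section
/- Let (l,u) be a reachable probability interval on a finite set X = {x_1,…,x_n} with credal set 𝒫_L. For each permutation σ of {1,…,n}, let 𝒫_σ be the credal set of the σ-p-box obtained from (l,u) and let L''_σ be the probability interval obtained from that σ-p-box. Then 𝒫_L = ⋂_σ 𝒫_σ = ⋂_σ 𝒫_{L''_σ}, where both intersections range over all permutations σ of {1,…,n}. -/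
open Finset
open scoped Classical

variable {X : Type*}

/-- The credal set induced by a probability interval `(l, u)`. -/
def credalPI [Fintype X] (l u : X → ℝ) : Set (X → ℝ) :=
  {p | IsProbDist p ∧ ∀ y, l y ≤ p y ∧ p y ≤ u y}

/-- A probability interval `(l, u)` is reachable. -/
def Reachable [Fintype X] [DecidableEq X] (l u : X → ℝ) : Prop :=
  (∑ y, l y ≤ 1 ∧ 1 ≤ ∑ y, u y) ∧
    ∀ y : X, u y + ∑ z ∈ Finset.univ.erase y, l z ≤ 1 ∧
      1 ≤ l y + ∑ z ∈ Finset.univ.erase y, u z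

/-- The nested set `A_i^σ = {x_{σ(1)}, …, x_{σ(i)}}` (here `0`-indexed via `e : Fin n ≃ X`). -/
def Aperm [Fintype X] [DecidableEq X] {n : ℕ} (e : Fin n ≃ X) (σ : Equiv.Perm (Fin n))
    (i : ℕ) : Finset X :=
  (Finset.univ.filter (fun k : Fin n => (k : ℕ) < i)).image (fun k => e (σ k))

/-- `α_i^σ = max(∑_{x ∈ A_i^σ} l(x), 1 − ∑_{x ∉ A_i^σ} u(x))`, with `α_0^σ = 0`. -/
noncomputable def alphaPerm [Fintype X] [DecidableEq X] {n : ℕ} (e : Fin n ≃ X)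
    (σ : Equiv.Perm (Fin n)) (l u : X → ℝ) (i : ℕ) : ℝ :=
  if i = 0 then 0 else
    max (∑ y ∈ Aperm e σ i, l y) (1 - ∑ y ∈ (Aperm e σ i)ᶜ, u y)

/-- `β_i^σ = min(∑_{x ∈ A_i^σ} u(x), 1 − ∑_{x ∉ A_i^σ} l(x))`, with `β_0^σ = 0`. -/
noncomputable def betaPerm [Fintype X] [DecidableEq X] {n : ℕ} (e : Fin n ≃ X)
    (σ : Equiv.Perm (Fin n)) (l u : X → ℝ) (i : ℕ) : ℝ :=
  if i = 0 then 0 else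
    min (∑ y ∈ Aperm e σ i, u y) (1 - ∑ y ∈ (Aperm e σ i)ᶜ, l y)

/-- The credal set `𝒫_σ` of the `σ`-p-box obtained from the probability interval `(l, u)`. -/
def credalPerm [Fintype X] [DecidableEq X] {n : ℕ} (e : Fin n ≃ X) (σ : Equiv.Perm (Fin n))
    (l u : X → ℝ) : Set (X → ℝ) :=
  {p | IsProbDist p ∧ ∀ i, 1 ≤ i → i ≤ n →
    alphaPerm e σ l u i ≤ ∑ y ∈ Aperm e σ i, p y ∧
      ∑ y ∈ Aperm e σ i, p y ≤ betaPerm e σ l u i}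

/-- `l''_σ(x_{σ(i)}) = max(0, α_i^σ − β_{i−1}^σ)`. -/
noncomputable def lPerm [Fintype X] [DecidableEq X] {n : ℕ} (e : Fin n ≃ X)
    (σ : Equiv.Perm (Fin n)) (l u : X → ℝ) (y : X) : ℝ :=
  max 0 (alphaPerm e σ l u ((σ.symm (e.symm y)).val + 1) -
    betaPerm e σ l u (σ.symm (e.symm y)).val)

/-- `u''_σ(x_{σ(i)}) = β_i^σ − α_{i−1}^σ`. -/
noncomputable def uPerm [Fintype X] [DecidableEq X] {n : ℕ} (e : Fin n ≃ X)
    (σ : Equiv.Perm (Fin n)) (l u : X → ℝ) (y : X) : ℝ :=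
  betaPerm e σ l u ((σ.symm (e.symm y)).val + 1) -
    alphaPerm e σ l u (σ.symm (e.symm y)).val

/-!
Every `p ∈ 𝒫_L` satisfies `α_i^σ ≤ P(A_i^σ) ≤ β_i^σ`, since `α_i^σ` and `β_i^σ` are exactly the
bounds on `P(A)` that the intervals give through `A` and through its complement; subtracting the
bounds for `A_{i-1}^σ` from those for `A_i^σ = A_{i-1}^σ ∪ {x_{σ(i)}}` gives `l''_σ ≤ p ≤ u''_σ`.
Conversely, for a permutation that lists `y` first, `A_1^σ = {y}`, so `l(y) ≤ α_1^σ ≤ l''_σ(y)`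
and `u''_σ(y) = β_1^σ ≤ u(y)`: each intersection is already contained in `𝒫_L`.
-/

lemma exists_perm_symm_eq_zero {n : ℕ} (e : Fin n ≃ X) (y : X) :
    ∃ σ : Equiv.Perm (Fin n), (σ.symm (e.symm y) : ℕ) = 0 :=
  ⟨Equiv.swap ⟨0, (e.symm y).pos⟩ (e.symm y), by simp⟩

section Aperm

variable [Fintype X] [DecidableEq X] {n : ℕ} (e : Fin n ≃ X) (σ : Equiv.Perm (Fin n))

@[simp]
lemma Aperm_zero : Aperm e σ 0 = ∅ := by
  simp [Aperm]

lemma Aperm_succ (j : Fin n) : Aperm e σ (j + 1) = insert (e (σ j)) (Aperm e σ j) := by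
  have hfilter : univ.filter (fun k : Fin n => (k : ℕ) < j + 1) =
      insert j (univ.filter (fun k : Fin n => (k : ℕ) < j)) := by
    ext k
    simp only [mem_filter, mem_univ, true_and, mem_insert, Fin.ext_iff]
    omega
  rw [Aperm, hfilter, image_insert, Aperm]

lemma apply_notMem_Aperm (j : Fin n) : e (σ j) ∉ Aperm e σ j := by
  simp only [Aperm, mem_image, mem_filter, mem_univ, true_and, not_exists, not_and]
  intro k hk hkj
  rw [σ.injective (e.injective hkj)] at hk
  exact lt_irrefl _ hk

lemma Aperm_one_of_symm_eq_zero {y : X} (hy : (σ.symm (e.symm y) : ℕ) = 0) :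
    Aperm e σ 1 = {y} := by
  simpa [hy] using Aperm_succ e σ (σ.symm (e.symm y))

end Aperm

section Bounds

variable [Fintype X] {l u p : X → ℝ}

lemma max_le_sum_of_mem_credalPI [DecidableEq X] (hp : p ∈ credalPI l u) (A : Finset X) :
    max (∑ y ∈ A, l y) (1 - ∑ y ∈ Aᶜ, u y) ≤ ∑ y ∈ A, p y := by
  have hsplit := sum_add_sum_compl A p
  have hcompl : ∑ y ∈ Aᶜ, p y ≤ ∑ y ∈ Aᶜ, u y := sum_le_sum fun y _ => (hp.2 y).2
  refine max_le (sum_le_sum fun y _ => (hp.2 y).1) ?_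
  linarith [hp.1.2]

lemma sum_le_min_of_mem_credalPI [DecidableEq X] (hp : p ∈ credalPI l u) (A : Finset X) :
    ∑ y ∈ A, p y ≤ min (∑ y ∈ A, u y) (1 - ∑ y ∈ Aᶜ, l y) := by
  have hsplit := sum_add_sum_compl A p
  have hcompl : ∑ y ∈ Aᶜ, l y ≤ ∑ y ∈ Aᶜ, p y := sum_le_sum fun y _ => (hp.2 y).1
  refine le_min (sum_le_sum fun y _ => (hp.2 y).2) ?_
  linarith [hp.1.2]

variable [DecidableEq X] {n : ℕ} (e : Fin n ≃ X) (σ : Equiv.Perm (Fin n))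

lemma alphaPerm_le_sum (hp : p ∈ credalPI l u) (i : ℕ) :
    alphaPerm e σ l u i ≤ ∑ y ∈ Aperm e σ i, p y := by
  rw [alphaPerm]
  split_ifs with hi
  · simp [hi]
  · exact max_le_sum_of_mem_credalPI hp _

lemma sum_le_betaPerm (hp : p ∈ credalPI l u) (i : ℕ) :
    ∑ y ∈ Aperm e σ i, p y ≤ betaPerm e σ l u i := by
  rw [betaPerm]
  split_ifs with hi
  · simp [hi]
  · exact sum_le_min_of_mem_credalPI hp _

lemma credalPI_subset_credalPerm : credalPI l u ⊆ credalPerm e σ l u :=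
  fun _ hp => ⟨hp.1, fun i _ _ => ⟨alphaPerm_le_sum e σ hp i, sum_le_betaPerm e σ hp i⟩⟩

lemma credalPI_subset_credalPI_lPerm_uPerm :
    credalPI l u ⊆ credalPI (lPerm e σ l u) (uPerm e σ l u) := by
  intro p hp
  refine ⟨hp.1, fun y => ?_⟩
  set j := σ.symm (e.symm y)
  have hy : e (σ j) = y := by simp [j]
  have hstep : ∑ z ∈ Aperm e σ (j + 1), p z = p y + ∑ z ∈ Aperm e σ j, p z := by
    rw [Aperm_succ, hy, sum_insert (hy ▸ apply_notMem_Aperm e σ j)]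
  have hnext := alphaPerm_le_sum e σ hp (j + 1)
  have hnext' := sum_le_betaPerm e σ hp (j + 1)
  have hprev := alphaPerm_le_sum e σ hp j
  have hprev' := sum_le_betaPerm e σ hp j
  exact ⟨max_le (hp.1.1 y) (by linarith), by rw [uPerm]; linarith⟩

end Bounds

section FirstPosition

variable [Fintype X] [DecidableEq X] {n : ℕ} (e : Fin n ≃ X) (σ : Equiv.Perm (Fin n))
  (l u : X → ℝ) {y : X}

lemma le_alphaPerm_one (hy : (σ.symm (e.symm y) : ℕ) = 0) : l y ≤ alphaPerm e σ l u 1 := by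
  simp [alphaPerm, Aperm_one_of_symm_eq_zero e σ hy]

lemma betaPerm_one_le (hy : (σ.symm (e.symm y) : ℕ) = 0) : betaPerm e σ l u 1 ≤ u y := by
  simp [betaPerm, Aperm_one_of_symm_eq_zero e σ hy]

lemma le_lPerm_of_symm_eq_zero (hy : (σ.symm (e.symm y) : ℕ) = 0) : l y ≤ lPerm e σ l u y := by
  rw [lPerm, hy, zero_add, betaPerm, if_pos rfl, sub_zero]
  exact (le_alphaPerm_one e σ l u hy).trans (le_max_right _ _)

lemma uPerm_le_of_symm_eq_zero (hy : (σ.symm (e.symm y) : ℕ) = 0) : uPerm e σ l u y ≤ u y := by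
  rw [uPerm, hy, zero_add, alphaPerm, if_pos rfl, sub_zero]
  exact betaPerm_one_le e σ l u hy

end FirstPosition

section Intersections

variable [Fintype X] [DecidableEq X] {n : ℕ} (e : Fin n ≃ X) {l u p : X → ℝ}

lemma mem_credalPI_of_forall_mem_credalPerm (hp : ∀ σ, p ∈ credalPerm e σ l u) :
    p ∈ credalPI l u := by
  refine ⟨(hp 1).1, fun y => ?_⟩
  obtain ⟨σ, hσ⟩ := exists_perm_symm_eq_zero e y
  have hbounds := (hp σ).2 1 le_rfl (e.symm y).pos
  rw [Aperm_one_of_symm_eq_zero e σ hσ, sum_singleton] at hbounds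
  exact ⟨(le_alphaPerm_one e σ l u hσ).trans hbounds.1, hbounds.2.trans (betaPerm_one_le e σ l u hσ)⟩

lemma mem_credalPI_of_forall_mem_credalPI_lPerm_uPerm
    (hp : ∀ σ, p ∈ credalPI (lPerm e σ l u) (uPerm e σ l u)) : p ∈ credalPI l u := by
  refine ⟨(hp 1).1, fun y => ?_⟩
  obtain ⟨σ, hσ⟩ := exists_perm_symm_eq_zero e y
  exact ⟨(le_lPerm_of_symm_eq_zero e σ l u hσ).trans ((hp σ).2 y).1,
    ((hp σ).2 y).2.trans (uPerm_le_of_symm_eq_zero e σ l u hσ)⟩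

end Intersections

theorem statement10_general [Fintype X] [DecidableEq X] {n : ℕ} (e : Fin n ≃ X)
    (l u : X → ℝ) :
    (credalPI l u = ⋂ σ : Equiv.Perm (Fin n), credalPerm e σ l u) ∧
      (credalPI l u = ⋂ σ : Equiv.Perm (Fin n), credalPI (lPerm e σ l u) (uPerm e σ l u)) := by
  refine ⟨(Set.subset_iInter fun σ => credalPI_subset_credalPerm e σ).antisymm fun p hp => ?_,
    (Set.subset_iInter fun σ => credalPI_subset_credalPI_lPerm_uPerm e σ).antisymm fun p hp => ?_⟩
  · exact mem_credalPI_of_forall_mem_credalPerm e (Set.mem_iInter.mp hp)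
  · exact mem_credalPI_of_forall_mem_credalPI_lPerm_uPerm e (Set.mem_iInter.mp hp)

theorem statement10 [Fintype X] [Nonempty X] [DecidableEq X] {n : ℕ} (e : Fin n ≃ X)
    (l u : X → ℝ) (hlu : ∀ y, 0 ≤ l y ∧ l y ≤ u y ∧ u y ≤ 1)
    (hreach : Reachable l u) :
    (credalPI l u = ⋂ σ : Equiv.Perm (Fin n), credalPerm e σ l u) ∧
      (credalPI l u = ⋂ σ : Equiv.Perm (Fin n), credalPI (lPerm e σ l u) (uPerm e σ l u)) :=
  statement10_general e l u
end

section
/- Let (l,u) be a probability interval on a nonempty finite set X. Then the credal set 𝒫_L is nonempty if and only if ∑_{x∈X} l(x) ≤ 1 ≤ ∑_{x∈X} u(x). -/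
open Finset
open scoped Classical

variable {X : Type*}

/-
The segment from `l` to `u` lies in the box `l ≤ p ≤ u`, and the affine map `p ↦ ∑ x, p x` sends it
onto the interval `[∑ l, ∑ u]`. So if `∑ l ≤ 1 ≤ ∑ u`, some point of the segment has mass `1`, and it
is nonnegative because `0 ≤ l`. The converse is obtained by summing the bounds.
-/

theorem exists_mem_Icc_apply_eq {𝕜 E : Type*} [Field 𝕜] [LinearOrder 𝕜] [IsStrictOrderedRing 𝕜]
    [AddCommGroup E] [PartialOrder E] [IsOrderedAddMonoid E] [Module 𝕜 E] [PosSMulMono 𝕜 E]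
    (f : E →ᵃ[𝕜] 𝕜) {l u : E} (hlu : l ≤ u) {c : 𝕜} (hc : c ∈ Set.Icc (f l) (f u)) :
    ∃ p ∈ Set.Icc l u, f p = c := by
  rw [← segment_eq_Icc (hc.1.trans hc.2), ← image_segment] at hc
  obtain ⟨p, hp, rfl⟩ := hc
  exact ⟨p, segment_subset_Icc hlu hp, rfl⟩

theorem exists_mem_Icc_sum_eq {ι : Type*} [Fintype ι] {l u : ι → ℝ} (hlu : l ≤ u) {c : ℝ}
    (hc : c ∈ Set.Icc (∑ i, l i) (∑ i, u i)) : ∃ p ∈ Set.Icc l u, ∑ i, p i = c := by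
  simpa using exists_mem_Icc_apply_eq (∑ i, LinearMap.proj i : (ι → ℝ) →ₗ[ℝ] ℝ).toAffineMap hlu
    (by simpa using hc)

theorem mem_credalPI_iff [Fintype X] {l u p : X → ℝ} (hl : 0 ≤ l) :
    p ∈ credalPI l u ↔ p ∈ Set.Icc l u ∧ ∑ x, p x = 1 :=
  ⟨fun ⟨⟨_, hsum⟩, hbounds⟩ => ⟨⟨fun x => (hbounds x).1, fun x => (hbounds x).2⟩, hsum⟩,
    fun ⟨⟨hlp, hpu⟩, hsum⟩ => ⟨⟨fun x => (hl x).trans (hlp x), hsum⟩, fun x => ⟨hlp x, hpu x⟩⟩⟩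

theorem statement12_general [Fintype X]
    (l u : X → ℝ) (hlu : ∀ y, 0 ≤ l y ∧ l y ≤ u y ∧ u y ≤ 1) :
    (credalPI l u).Nonempty ↔ (∑ y, l y ≤ 1 ∧ 1 ≤ ∑ y, u y) := by
  have hl : 0 ≤ l := fun y => (hlu y).1
  constructor
  · rintro ⟨p, hp⟩
    obtain ⟨⟨hlp, hpu⟩, hsum⟩ := (mem_credalPI_iff hl).1 hp
    exact ⟨hsum ▸ Fintype.sum_mono hlp, hsum ▸ Fintype.sum_mono hpu⟩
  · intro hmass
    obtain ⟨p, hp, hsum⟩ := exists_mem_Icc_sum_eq (fun y => (hlu y).2.1) hmass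
    exact ⟨p, (mem_credalPI_iff hl).2 ⟨hp, hsum⟩⟩

theorem statement12 [Fintype X] [Nonempty X]
    (l u : X → ℝ) (hlu : ∀ y, 0 ≤ l y ∧ l y ≤ u y ∧ u y ≤ 1) :
    (credalPI l u).Nonempty ↔ (∑ y, l y ≤ 1 ∧ 1 ≤ ∑ y, u y) :=
  statement12_general l u hlu
end

section
/- Let (l,u) be a probability interval on a nonempty finite set X with ∑_{x∈X} l(x) ≤ 1 ≤ ∑_{x∈X} u(x). Then the following are equivalent: (i) for every x ∈ X, u(x) + ∑_{y≠x} l(y) ≤ 1 and l(x) + ∑_{y≠x} u(y) ≥ 1; (ii) for every x ∈ X there exist probability distributions p and p' in 𝒫_L with p(x) = l(x) and p'(x) = u(x). -/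
open Finset
open scoped Classical

variable {X : Type*}

/-!
A value `v` is attainable as `p y` for some `p ∈ 𝒫_L` exactly when `l y ≤ v ≤ u y` and the
remaining mass `1 - v` lies between `∑_{z ≠ y} l z` and `∑_{z ≠ y} u z`: any mass in that range is
spread over the other points by `l + c • (u - l)` for a suitable `c ∈ [0, 1]`. For `v = l y` and
`v = u y` one of the two mass conditions is (i) and the other is the hypothesis on the total sums.
-/

theorem Finset.exists_sum_eq_of_sum_le_of_le_sum {ι : Type*} (s : Finset ι) {l u : ι → ℝ}
    (hlu : ∀ z ∈ s, l z ≤ u z) {t : ℝ} (hl : ∑ z ∈ s, l z ≤ t) (hu : t ≤ ∑ z ∈ s, u z) :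
    ∃ p : ι → ℝ, (∀ z ∈ s, l z ≤ p z ∧ p z ≤ u z) ∧ ∑ z ∈ s, p z = t := by
  set L := ∑ z ∈ s, l z
  set U := ∑ z ∈ s, u z
  set c := (t - L) / (U - L)
  have hc0 : 0 ≤ c := div_nonneg (by linarith) (by linarith)
  have hc1 : c ≤ 1 := div_le_one_of_le₀ (by linarith) (by linarith)
  -- if `U = L` then `c = 0` by the junk value of division, and `t = L`
  have hc : c * (U - L) = t - L := by
    rcases (show L ≤ U by linarith).eq_or_lt with hLU | hLU
    · simp only [hLU, sub_self, mul_zero]; linarith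
    · exact div_mul_cancel₀ _ (by linarith)
  refine ⟨fun z => l z + c * (u z - l z), fun z hz => ⟨?_, ?_⟩, ?_⟩
  · nlinarith [hlu z hz]
  · nlinarith [hlu z hz]
  · rw [sum_add_distrib, ← mul_sum, sum_sub_distrib]
    linarith

section ProbabilityInterval

variable [Fintype X] [DecidableEq X] {l u p : X → ℝ}

theorem IsProbDist.sum_erase_eq_one_sub (hp : IsProbDist p) (y : X) :
    ∑ z ∈ univ.erase y, p z = 1 - p y := by
  rw [← hp.2, ← add_sum_erase univ p (mem_univ y), add_sub_cancel_left]

theorem exists_mem_credalPI_apply_eq_iff (hl : ∀ z, 0 ≤ l z) (hlu : ∀ z, l z ≤ u z) (y : X)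
    (v : ℝ) :
    (∃ p ∈ credalPI l u, p y = v) ↔
      (l y ≤ v ∧ v ≤ u y) ∧
        ∑ z ∈ univ.erase y, l z ≤ 1 - v ∧ 1 - v ≤ ∑ z ∈ univ.erase y, u z := by
  constructor
  · rintro ⟨p, ⟨hp, hpb⟩, rfl⟩
    rw [← hp.sum_erase_eq_one_sub y]
    exact ⟨hpb y, sum_le_sum fun z _ => (hpb z).1, sum_le_sum fun z _ => (hpb z).2⟩
  · rintro ⟨hvy, hsl, hsu⟩
    obtain ⟨q, hqb, hqs⟩ :=
      (univ.erase y).exists_sum_eq_of_sum_le_of_le_sum (fun z _ => hlu z) hsl hsu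
    have hpb : ∀ z, l z ≤ Function.update q y v z ∧ Function.update q y v z ≤ u z := by
      intro z
      rcases eq_or_ne z y with rfl | hz
      · simpa using hvy
      · simpa [hz] using hqb z (mem_erase.2 ⟨hz, mem_univ z⟩)
    refine ⟨Function.update q y v, ⟨⟨fun z => (hl z).trans (hpb z).1, ?_⟩, hpb⟩, by simp⟩
    rw [sum_update_of_mem (mem_univ y), sdiff_singleton_eq_erase, hqs, add_sub_cancel]

end ProbabilityInterval

theorem statement13_general [Fintype X] [DecidableEq X]
    (l u : X → ℝ) (hlu : ∀ y, 0 ≤ l y ∧ l y ≤ u y ∧ u y ≤ 1)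
    (hsum : ∑ y, l y ≤ 1 ∧ 1 ≤ ∑ y, u y) :
    (∀ y : X, u y + ∑ z ∈ Finset.univ.erase y, l z ≤ 1 ∧
        1 ≤ l y + ∑ z ∈ Finset.univ.erase y, u z) ↔
      ∀ y : X, (∃ p ∈ credalPI l u, p y = l y) ∧ (∃ p ∈ credalPI l u, p y = u y) := by
  simp_rw [exists_mem_credalPI_apply_eq_iff (fun z => (hlu z).1) (fun z => (hlu z).2.1)]
  refine forall_congr' fun y => ?_
  have hl := add_sum_erase univ l (mem_univ y)
  have hu := add_sum_erase univ u (mem_univ y)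
  obtain ⟨-, hly, -⟩ := hlu y
  constructor
  · rintro ⟨h₁, h₂⟩
    refine ⟨⟨⟨le_rfl, hly⟩, ?_, ?_⟩, ⟨⟨hly, le_rfl⟩, ?_, ?_⟩⟩ <;> linarith
  · rintro ⟨⟨-, -, h₂⟩, ⟨-, h₁, -⟩⟩
    constructor <;> linarith

theorem statement13 [Fintype X] [Nonempty X] [DecidableEq X]
    (l u : X → ℝ) (hlu : ∀ y, 0 ≤ l y ∧ l y ≤ u y ∧ u y ≤ 1)
    (hsum : ∑ y, l y ≤ 1 ∧ 1 ≤ ∑ y, u y) :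
    (∀ y : X, u y + ∑ z ∈ Finset.univ.erase y, l z ≤ 1 ∧
        1 ≤ l y + ∑ z ∈ Finset.univ.erase y, u z) ↔
      ∀ y : X, (∃ p ∈ credalPI l u, p y = l y) ∧ (∃ p ∈ credalPI l u, p y = u y) :=
  statement13_general l u hlu hsum
end

section
/- Let (l,u) be a reachable probability interval on a nonempty finite set X with credal set 𝒫_L. Then for every A ⊆ X, the minimum of P(A) over p ∈ 𝒫_L equals max(∑_{x∈A} l(x), 1 − ∑_{x∉A} u(x)), and the maximum of P(A) over p ∈ 𝒫_L equals min(∑_{x∈A} u(x), 1 − ∑_{x∉A} l(x)). -/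
open Finset
open scoped Classical

variable {X : Type*}

/-!
A distribution in the credal set puts some mass `t` on `B` and `1 - t` on `Bᶜ`, so `t` lies
between `∑_B l` and `∑_B u`, and `1 - t` between `∑_{Bᶜ} l` and `∑_{Bᶜ} u`. Conversely, every
`t` meeting these four bounds is attained: on each of `B` and `Bᶜ`, interpolate linearly between
`l` and `u` to hit the required mass. Hence the values of `P(B)` over the credal set form exactly
the interval `[max (∑_B l) (1 - ∑_{Bᶜ} u), min (∑_B u) (1 - ∑_{Bᶜ} l)]`, which is nonempty as
soon as `∑ l ≤ 1 ≤ ∑ u`.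
-/

theorem Finset.exists_mem_Icc_sum_eq {ι : Type*} (S : Finset ι) {l u : ι → ℝ}
    (hlu : ∀ x ∈ S, l x ≤ u x) {t : ℝ}
    (ht : t ∈ Set.Icc (∑ x ∈ S, l x) (∑ x ∈ S, u x)) :
    ∃ q : ι → ℝ, (∀ x ∈ S, q x ∈ Set.Icc (l x) (u x)) ∧ ∑ x ∈ S, q x = t := by
  let f : ℝ → ℝ := fun c => ∑ x ∈ S, (l x + c * (u x - l x))
  have hf : ContinuousOn f (Set.Icc 0 1) := by fun_prop
  obtain ⟨c, ⟨hc0, hc1⟩, hfc⟩ :=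
    intermediate_value_Icc zero_le_one hf (by simpa [f] using ht)
  refine ⟨fun x => l x + c * (u x - l x), fun x hx => ⟨?_, ?_⟩, hfc⟩ <;>
    nlinarith [hlu x hx]

section CredalPI

variable [Fintype X] [DecidableEq X]

theorem sum_mem_Icc_of_mem_credalPI {l u p : X → ℝ} (hp : p ∈ credalPI l u) (B : Finset X) :
    ∑ y ∈ B, p y ∈
      Set.Icc (max (∑ y ∈ B, l y) (1 - ∑ y ∈ Bᶜ, u y))
        (min (∑ y ∈ B, u y) (1 - ∑ y ∈ Bᶜ, l y)) := by
  obtain ⟨⟨-, hp1⟩, hlpu⟩ := hp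
  have hsplit := sum_add_sum_compl B p
  have hlB : ∑ y ∈ B, l y ≤ ∑ y ∈ B, p y := sum_le_sum fun y _ => (hlpu y).1
  have hlBc : ∑ y ∈ Bᶜ, l y ≤ ∑ y ∈ Bᶜ, p y := sum_le_sum fun y _ => (hlpu y).1
  have huB : ∑ y ∈ B, p y ≤ ∑ y ∈ B, u y := sum_le_sum fun y _ => (hlpu y).2
  have huBc : ∑ y ∈ Bᶜ, p y ≤ ∑ y ∈ Bᶜ, u y := sum_le_sum fun y _ => (hlpu y).2
  exact ⟨max_le hlB (by linarith), le_min huB (by linarith)⟩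

theorem exists_mem_credalPI_sum_eq {l u : X → ℝ} (hl : ∀ y, 0 ≤ l y)
    (hlu : ∀ y, l y ≤ u y) (B : Finset X) {t : ℝ}
    (ht : t ∈ Set.Icc (max (∑ y ∈ B, l y) (1 - ∑ y ∈ Bᶜ, u y))
      (min (∑ y ∈ B, u y) (1 - ∑ y ∈ Bᶜ, l y))) :
    ∃ p ∈ credalPI l u, ∑ y ∈ B, p y = t := by
  obtain ⟨⟨hlB, huBc⟩, ⟨huB, hlBc⟩⟩ := And.imp max_le_iff.1 le_min_iff.1 ht
  obtain ⟨q, hq, hqB⟩ := B.exists_mem_Icc_sum_eq (fun y _ => hlu y) ⟨hlB, huB⟩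
  obtain ⟨r, hr, hrBc⟩ :=
    Bᶜ.exists_mem_Icc_sum_eq (t := 1 - t) (fun y _ => hlu y) ⟨by linarith, by linarith⟩
  have hbounds : ∀ y, B.piecewise q r y ∈ Set.Icc (l y) (u y) := fun y => by
    by_cases hy : y ∈ B
    · simpa [hy] using hq y hy
    · simpa [hy] using hr y (mem_compl.2 hy)
  have hsumB : ∑ y ∈ B, B.piecewise q r y = t := by
    rw [← hqB]; exact sum_congr rfl fun y hy => piecewise_eq_of_mem _ _ _ hy
  have hsumBc : ∑ y ∈ Bᶜ, B.piecewise q r y = 1 - t := by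
    rw [← hrBc]
    exact sum_congr rfl fun y hy => piecewise_eq_of_notMem _ _ _ (mem_compl.1 hy)
  refine ⟨B.piecewise q r, ⟨⟨fun y => (hl y).trans (hbounds y).1, ?_⟩, hbounds⟩, hsumB⟩
  rw [← sum_add_sum_compl B, hsumB, hsumBc]
  ring

theorem image_sum_credalPI {l u : X → ℝ} (hl : ∀ y, 0 ≤ l y) (hlu : ∀ y, l y ≤ u y)
    (B : Finset X) :
    (fun p : X → ℝ => ∑ y ∈ B, p y) '' credalPI l u =
      Set.Icc (max (∑ y ∈ B, l y) (1 - ∑ y ∈ Bᶜ, u y))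
        (min (∑ y ∈ B, u y) (1 - ∑ y ∈ Bᶜ, l y)) := by
  ext t
  constructor
  · rintro ⟨p, hp, rfl⟩
    exact sum_mem_Icc_of_mem_credalPI hp B
  · exact fun ht => exists_mem_credalPI_sum_eq hl hlu B ht

theorem max_sum_le_min_sum {l u : X → ℝ} (hlu : ∀ y, l y ≤ u y)
    (hl1 : ∑ y, l y ≤ 1) (hu1 : 1 ≤ ∑ y, u y) (B : Finset X) :
    max (∑ y ∈ B, l y) (1 - ∑ y ∈ Bᶜ, u y) ≤ min (∑ y ∈ B, u y) (1 - ∑ y ∈ Bᶜ, l y) := by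
  rw [← sum_add_sum_compl B l] at hl1
  rw [← sum_add_sum_compl B u] at hu1
  have hB : ∑ y ∈ B, l y ≤ ∑ y ∈ B, u y := sum_le_sum fun y _ => hlu y
  have hBc : ∑ y ∈ Bᶜ, l y ≤ ∑ y ∈ Bᶜ, u y := sum_le_sum fun y _ => hlu y
  exact max_le (le_min hB (by linarith)) (le_min (by linarith) (by linarith))

end CredalPI

theorem statement14_general [Fintype X] [DecidableEq X]
    (l u : X → ℝ) (hlu : ∀ y, 0 ≤ l y ∧ l y ≤ u y ∧ u y ≤ 1)
    (hreach : Reachable l u) (B : Finset X) :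
    IsLeast ((fun p : X → ℝ => ∑ y ∈ B, p y) '' credalPI l u)
      (max (∑ y ∈ B, l y) (1 - ∑ y ∈ Bᶜ, u y)) ∧
    IsGreatest ((fun p : X → ℝ => ∑ y ∈ B, p y) '' credalPI l u)
      (min (∑ y ∈ B, u y) (1 - ∑ y ∈ Bᶜ, l y)) := by
  have hle : ∀ y, l y ≤ u y := fun y => (hlu y).2.1
  have hab := max_sum_le_min_sum hle hreach.1.1 hreach.1.2 B
  rw [image_sum_credalPI (fun y => (hlu y).1) hle B]
  exact ⟨isLeast_Icc hab, isGreatest_Icc hab⟩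

theorem statement14 [Fintype X] [Nonempty X] [DecidableEq X]
    (l u : X → ℝ) (hlu : ∀ y, 0 ≤ l y ∧ l y ≤ u y ∧ u y ≤ 1)
    (hreach : Reachable l u) (B : Finset X) :
    IsLeast ((fun p : X → ℝ => ∑ y ∈ B, p y) '' credalPI l u)
      (max (∑ y ∈ B, l y) (1 - ∑ y ∈ Bᶜ, u y)) ∧
    IsGreatest ((fun p : X → ℝ => ∑ y ∈ B, p y) '' credalPI l u)
      (min (∑ y ∈ B, u y) (1 - ∑ y ∈ Bᶜ, l y)) :=
  statement14_general l u hlu hreach B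
end

section
/- Let (l,u) be a reachable probability interval on a nonempty finite set X and define, for A ⊆ X, P̲(A) = max(∑_{x∈A} l(x), 1 − ∑_{x∉A} u(x)). Then P̲ is a 2-monotone capacity: P̲(∅) = 0, P̲(X) = 1, P̲ is monotone with respect to set inclusion, and for all A, B ⊆ X, P̲(A ∪ B) + P̲(A ∩ B) ≥ P̲(A) + P̲(B). -/
open Finset
open scoped Classical

variable {X : Type*}

/-- The lower probability `P̲(A) = max(∑_{x ∈ A} l(x), 1 − ∑_{x ∉ A} u(x))` induced by a
probability interval. -/
noncomputable def lowProb [Fintype X] [DecidableEq X] (l u : X → ℝ) (B : Finset X) : ℝ :=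
  max (∑ y ∈ B, l y) (1 - ∑ y ∈ Bᶜ, u y)

/-! Both `∑_{x ∈ A} l x` and `1 - ∑_{x ∉ A} u x` are modular set functions, and the maximum of
two modular functions `f`, `g` is supermodular as soon as the exchange inequality
`f A + g B ≤ g (A ∪ B) + f (A ∩ B)` holds; for `P̲` it reduces to `∑_{A \ B} l ≤ ∑_{A \ B} u`. -/

theorem supermodular_max_of_modular {α β : Type*} [Lattice α] [AddCommGroup β] [LinearOrder β]
    [IsOrderedAddMonoid β] {f g : α → β}
    (hf : ∀ a b, f a + f b = f (a ⊔ b) + f (a ⊓ b))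
    (hg : ∀ a b, g a + g b = g (a ⊔ b) + g (a ⊓ b))
    (hfg : ∀ a b, f a + g b ≤ g (a ⊔ b) + f (a ⊓ b)) (a b : α) :
    max (f a) (g a) + max (f b) (g b) ≤
      max (f (a ⊔ b)) (g (a ⊔ b)) + max (f (a ⊓ b)) (g (a ⊓ b)) := by
  rcases max_choice (f a) (g a) with ha | ha <;> rcases max_choice (f b) (g b) with hb | hb <;>
    rw [ha, hb]
  · rw [hf]
    exact add_le_add (le_max_left _ _) (le_max_left _ _)
  · exact (hfg a b).trans (add_le_add (le_max_right _ _) (le_max_left _ _))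
  · rw [add_comm, sup_comm a b, inf_comm a b]
    exact (hfg b a).trans (add_le_add (le_max_right _ _) (le_max_left _ _))
  · rw [hg]
    exact add_le_add (le_max_right _ _) (le_max_right _ _)

section LowerProbability

variable [Fintype X] [DecidableEq X] {l u : X → ℝ}

theorem sum_compl_add_sum_compl (u : X → ℝ) (B C : Finset X) :
    ∑ y ∈ Bᶜ, u y + ∑ y ∈ Cᶜ, u y = ∑ y ∈ (B ∪ C)ᶜ, u y + ∑ y ∈ (B ∩ C)ᶜ, u y := by
  rw [compl_union, compl_inter, ← sum_union_inter, add_comm]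

theorem sum_compl_eq_sum_sdiff_add_sum_compl_union (u : X → ℝ) (B C : Finset X) :
    ∑ y ∈ Cᶜ, u y = ∑ y ∈ B \ C, u y + ∑ y ∈ (B ∪ C)ᶜ, u y := by
  have hinter : Cᶜ ∩ B = B \ C := by ext; simp [and_comm]
  have hsdiff : Cᶜ \ B = (B ∪ C)ᶜ := by ext; simp [and_comm]
  rw [← sum_inter_add_sum_sdiff Cᶜ B, hinter, hsdiff]

theorem lowProb_empty (hu : 1 ≤ ∑ y, u y) : lowProb l u ∅ = 0 := by
  simp only [lowProb, sum_empty, compl_empty]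
  exact max_eq_left (by linarith)

theorem lowProb_univ (hl : ∑ y, l y ≤ 1) : lowProb l u univ = 1 := by
  simp only [lowProb, compl_univ, sum_empty, sub_zero]
  exact max_eq_right hl

theorem lowProb_mono (hl : 0 ≤ l) (hu : 0 ≤ u) : Monotone (lowProb l u) := by
  intro B C hBC
  refine max_le_max (sum_le_sum_of_subset_of_nonneg hBC fun y _ _ => hl y) ?_
  exact sub_le_sub_left (sum_le_sum_of_subset_of_nonneg (compl_subset_compl.mpr hBC)
    fun y _ _ => hu y) 1

theorem lowProb_supermodular (hlu : l ≤ u) (B C : Finset X) :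
    lowProb l u B + lowProb l u C ≤ lowProb l u (B ∪ C) + lowProb l u (B ∩ C) := by
  refine supermodular_max_of_modular (f := fun B => ∑ y ∈ B, l y)
    (g := fun B => 1 - ∑ y ∈ Bᶜ, u y) (fun _ _ => sum_union_inter.symm) ?_ ?_ B C <;>
    intro s t <;> simp only [sup_eq_union, inf_eq_inter]
  · linarith [sum_compl_add_sum_compl u s t]
  · have hl := sum_inter_add_sum_sdiff s t l
    have hu := sum_compl_eq_sum_sdiff_add_sum_compl_union u s t
    linarith [sum_le_sum fun y (_ : y ∈ s \ t) => hlu y]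

end LowerProbability

theorem statement15_general [Fintype X] [DecidableEq X]
    (l u : X → ℝ) (hlu : ∀ y, 0 ≤ l y ∧ l y ≤ u y ∧ u y ≤ 1)
    (hreach : Reachable l u) :
    lowProb l u ∅ = 0 ∧ lowProb l u Finset.univ = 1 ∧
      (∀ B C : Finset X, B ⊆ C → lowProb l u B ≤ lowProb l u C) ∧
      (∀ B C : Finset X,
        lowProb l u B + lowProb l u C ≤ lowProb l u (B ∪ C) + lowProb l u (B ∩ C)) := by
  obtain ⟨⟨hl₁, hu₁⟩, -⟩ := hreach
  have hl : 0 ≤ l := fun y => (hlu y).1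
  have hle : l ≤ u := fun y => (hlu y).2.1
  exact ⟨lowProb_empty hu₁, lowProb_univ hl₁, fun _ _ hBC => lowProb_mono hl (hl.trans hle) hBC,
    lowProb_supermodular hle⟩

theorem statement15 [Fintype X] [Nonempty X] [DecidableEq X]
    (l u : X → ℝ) (hlu : ∀ y, 0 ≤ l y ∧ l y ≤ u y ∧ u y ≤ 1)
    (hreach : Reachable l u) :
    lowProb l u ∅ = 0 ∧ lowProb l u Finset.univ = 1 ∧
      (∀ B C : Finset X, B ⊆ C → lowProb l u B ≤ lowProb l u C) ∧
      (∀ B C : Finset X,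
        lowProb l u B + lowProb l u C ≤ lowProb l u (B ∪ C) + lowProb l u (B ∩ C)) :=
  statement15_general l u hlu hreach
end
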